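/- arXiv:1601.05843 — 2 statements merged into one kernel-verified Lean document; each statement's English description precedes it below -/
import Mathlib

section
/- Let n ≥ 1 and let u : ℝⁿ → ℝ be convex. Suppose that for some unit vector e′ the set {x ∈ ℝⁿ : u(x) = 0} contains the whole straight line {t e′ : t ∈ ℝ}. Then u(x + t e′) = u(x) for every x ∈ ℝⁿ and every t ∈ ℝ. -/
open MeasureTheory Metric Set Filter

noncomputable section

/-!
Restricted to a line, a convex function that is bounded above is constant: by convexity its
increments grow at least linearly along the line, so a positive increment would be unbounded.
A bound on the line `ℝ • e'` gives a bound on every parallel line `x + ℝ • e'`, because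
`x + s • e'` is the midpoint of `2 • x` and `(2 * s) • e'`.
-/

lemma nonpos_of_forall_one_le_mul_le {a b : ℝ} (h : ∀ r : ℝ, 1 ≤ r → r * a ≤ b) : a ≤ 0 := by
  by_contra! ha
  have hr := h (max 1 (b / a + 1)) (le_max_left _ _)
  have : (b / a + 1) * a ≤ max 1 (b / a + 1) * a :=
    mul_le_mul_of_nonneg_right (le_max_right _ _) ha.le
  rw [add_mul, div_mul_cancel₀ _ ha.ne'] at this
  linarith

section

variable {E : Type*} [AddCommGroup E] [Module ℝ E] {f : E → ℝ}

lemma ConvexOn.apply_add_le_of_forall_le (hf : ConvexOn ℝ univ f) {x v : E} {C : ℝ}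
    (hC : ∀ r : ℝ, 1 ≤ r → f (x + r • v) ≤ C) : f (x + v) ≤ f x := by
  suffices ∀ r : ℝ, 1 ≤ r → r * (f (x + v) - f x) ≤ C - f x by
    linarith [nonpos_of_forall_one_le_mul_le this]
  intro r hr
  have hr0 : 0 < r := one_pos.trans_le hr
  have hcomb : (1 - r⁻¹) • x + r⁻¹ • (x + r • v) = x + v := by
    match_scalars <;> field_simp; ring
  have hconv := hf.2 (mem_univ x) (mem_univ (x + r • v))
    (sub_nonneg.2 (inv_le_one_of_one_le₀ hr)) (inv_nonneg.2 hr0.le) (sub_add_cancel 1 r⁻¹)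
  rw [hcomb, smul_eq_mul, smul_eq_mul] at hconv
  calc r * (f (x + v) - f x)
      ≤ r * ((1 - r⁻¹) * f x + r⁻¹ * f (x + r • v) - f x) := by gcongr
    _ = f (x + r • v) - f x := by field_simp; ring
    _ ≤ C - f x := by linarith [hC r hr]

lemma ConvexOn.apply_add_smul_le_of_forall_smul_le (hf : ConvexOn ℝ univ f) {v : E} {M : ℝ}
    (hM : ∀ s : ℝ, f (s • v) ≤ M) (x : E) (s : ℝ) :
    f (x + s • v) ≤ (f ((2 : ℝ) • x) + M) / 2 := by
  have hmid := hf.2 (mem_univ ((2 : ℝ) • x)) (mem_univ ((2 * s) • v))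
    (by norm_num : (0 : ℝ) ≤ 1 / 2) (by norm_num : (0 : ℝ) ≤ 1 / 2) (by norm_num)
  have hcomb : (1 / 2 : ℝ) • ((2 : ℝ) • x) + (1 / 2 : ℝ) • ((2 * s) • v) = x + s • v := by
    module
  rw [hcomb, smul_eq_mul, smul_eq_mul] at hmid
  linarith [hM (2 * s)]

lemma ConvexOn.apply_add_smul_eq_of_forall_smul_le (hf : ConvexOn ℝ univ f) {v : E} {M : ℝ}
    (hM : ∀ s : ℝ, f (s • v) ≤ M) (x : E) (t : ℝ) : f (x + t • v) = f x := by
  have hle : ∀ (y : E) (t : ℝ), f (y + t • v) ≤ f y := fun y t =>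
    hf.apply_add_le_of_forall_le fun r _ => by
      rw [smul_smul]
      exact hf.apply_add_smul_le_of_forall_smul_le hM y (r * t)
  have hge := hle (x + t • v) (-t)
  rw [neg_smul, add_neg_cancel_right] at hge
  exact (hle x t).antisymm hge

end

theorem convex_invariant_along_line_in_zero_set_general
    (n : ℕ)
    (u : EuclideanSpace ℝ (Fin n) → ℝ)
    (hu : ConvexOn ℝ Set.univ u)
    (e' : EuclideanSpace ℝ (Fin n))
    (hline : ∀ t : ℝ, u (t • e') = 0) :
    ∀ (x : EuclideanSpace ℝ (Fin n)) (t : ℝ), u (x + t • e') = u x :=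
  hu.apply_add_smul_eq_of_forall_smul_le fun s => (hline s).le

theorem convex_invariant_along_line_in_zero_set
    (n : ℕ) (hn : 1 ≤ n)
    (u : EuclideanSpace ℝ (Fin n) → ℝ)
    (hu : ConvexOn ℝ Set.univ u)
    (e' : EuclideanSpace ℝ (Fin n)) (he' : ‖e'‖ = 1)
    (hline : ∀ t : ℝ, u (t • e') = 0) :
    ∀ (x : EuclideanSpace ℝ (Fin n)) (t : ℝ), u (x + t • e') = u x :=
  convex_invariant_along_line_in_zero_set_general n u hu e' hline
end
end

section
/- Let n ≥ 1, s ∈ (0,1), 0 < λ ≤ Λ. There exists a constant C > 0, depending only on n, s, λ, Λ, such that for every unit vector e ∈ ℝⁿ, setting φ(x) := exp(−|e·x|), the following holds: for every admissible kernel μ and every x ∈ ℝⁿ with e·x ≠ 0, the function y ↦ |δ²φ(x,y)|·|y|^{−n−2s} is integrable on ℝⁿ and L_μ φ(x) = ∫_{ℝⁿ} δ²φ(x,y) μ(y/|y|)|y|^{−n−2s} dy ≤ C. -/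
open MeasureTheory Metric Set Filter
open scoped RealInnerProductSpace Pointwise

noncomputable section

/-- Second-order centered difference `δ²v(x,y) = (v(x+y)+v(x-y))/2 - v(x)`. -/
def d2 {n : ℕ} (v : EuclideanSpace ℝ (Fin n) → ℝ) (x y : EuclideanSpace ℝ (Fin n)) : ℝ :=
  (v (x + y) + v (x - y)) / 2 - v x

/-- The kernel `|y|^(-n-2s)`. -/
def kk (n : ℕ) (s : ℝ) (y : EuclideanSpace ℝ (Fin n)) : ℝ :=
  ‖y‖ ^ (-((n : ℝ) + 2 * s))

/-- Admissible kernels of the class `𝓛_*`: measurable, even, with `λ ≤ μ ≤ Λ` on the sphere. -/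
def IsKernel {n : ℕ} (lam Lam : ℝ) (μ : EuclideanSpace ℝ (Fin n) → ℝ) : Prop :=
  Measurable μ ∧ (∀ θ, μ (-θ) = μ θ) ∧
    ∀ θ : EuclideanSpace ℝ (Fin n), ‖θ‖ = 1 → lam ≤ μ θ ∧ μ θ ≤ Lam

/-- The operator `L_μ` of the class `𝓛_*`, evaluated pointwise. -/
def opL {n : ℕ} (s : ℝ) (μ v : EuclideanSpace ℝ (Fin n) → ℝ)
    (x : EuclideanSpace ℝ (Fin n)) : ℝ :=
  ∫ y, d2 v x y * (μ (‖y‖⁻¹ • y) * kk n s y)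

/-- Integrability of `y ↦ |δ²v(x,y)| |y|^(-n-2s)`. -/
def intOK {n : ℕ} (s : ℝ) (v : EuclideanSpace ℝ (Fin n) → ℝ)
    (x : EuclideanSpace ℝ (Fin n)) : Prop :=
  Integrable (fun y => |d2 v x y| * kk n s y)

/-!
With `a = ⟪e, x⟫` and `t = ⟪e, y⟫`, `δ²φ(x, y)` is the second difference of `exp (-|·|)` at `a`
with step `t`. It is at most `exp (-|a|) * (cosh t - 1)`, hence at most `min (t², 1)`, and on
`|t| ≤ |a|`, where `exp (-|·|)` is smooth, it is nonnegative. So `|δ²φ(x, y)|` is bounded by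
`min (‖y‖², 1) / min (|a|, 1)²`, which gives the integrability, and since `μ ≥ 0` only the positive
part of `δ²φ` counts from above: `L_μ φ(x) ≤ Λ ∫ min (‖y‖², 1) ‖y‖^(-n-2s) dy`, a bound
independent of `e`, `x` and `μ`.
-/

open Real

lemma cosh_sub_one_le_sq {t : ℝ} (ht : |t| ≤ 1) : cosh t - 1 ≤ t ^ 2 := by
  have hsq : |t ^ 2 / 2| ≤ 1 := by
    rw [abs_of_nonneg (by positivity)]
    nlinarith [abs_nonneg t, sq_abs t]
  calc cosh t - 1 ≤ exp (t ^ 2 / 2) - 1 := by linarith [cosh_le_exp_half_sq t]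
    _ ≤ |exp (t ^ 2 / 2) - 1| := le_abs_self _
    _ ≤ 2 * |t ^ 2 / 2| := abs_exp_sub_one_le hsq
    _ = t ^ 2 := by rw [abs_of_nonneg (by positivity)]; ring

def secondDiffExpNegAbs (a t : ℝ) : ℝ :=
  (exp (-|a + t|) + exp (-|a - t|)) / 2 - exp (-|a|)

namespace secondDiffExpNegAbs

lemma abs_left (a t : ℝ) : secondDiffExpNegAbs |a| t = secondDiffExpNegAbs a t := by
  rcases abs_choice a with h | h <;> rw [h]
  rw [secondDiffExpNegAbs, secondDiffExpNegAbs, show -a + t = -(a - t) by ring,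
    show -a - t = -(a + t) by ring, abs_neg, abs_neg, abs_neg]
  ring

lemma le_exp_mul_cosh_sub_one (a t : ℝ) :
    secondDiffExpNegAbs a t ≤ exp (-|a|) * (cosh t - 1) := by
  wlog ha : 0 ≤ a generalizing a
  · simpa [abs_left] using this |a| (abs_nonneg a)
  have hplus : exp (-|a + t|) ≤ exp (-a) * exp (-t) := by
    rw [← exp_add]; exact exp_le_exp.2 (by linarith [le_abs_self (a + t)])
  have hminus : exp (-|a - t|) ≤ exp (-a) * exp t := by
    rw [← exp_add]; exact exp_le_exp.2 (by linarith [le_abs_self (a - t)])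
  rw [secondDiffExpNegAbs, abs_of_nonneg ha, cosh_eq]
  linarith

lemma eq_exp_mul_cosh_sub_one {a t : ℝ} (h : |t| ≤ |a|) :
    secondDiffExpNegAbs a t = exp (-|a|) * (cosh t - 1) := by
  wlog ha : 0 ≤ a generalizing a
  · simpa [abs_left] using this (a := |a|) (by rwa [abs_abs]) (abs_nonneg a)
  rw [abs_of_nonneg ha] at h ⊢
  obtain ⟨h₁, h₂⟩ := abs_le.1 h
  rw [secondDiffExpNegAbs, abs_of_nonneg ha, abs_of_nonneg (by linarith : 0 ≤ a + t),
    abs_of_nonneg (by linarith : 0 ≤ a - t), cosh_eq, neg_add, neg_sub, exp_add,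
    sub_eq_add_neg t a, exp_add]
  ring

lemma abs_le_one (a t : ℝ) : |secondDiffExpNegAbs a t| ≤ 1 := by
  have h₁ : exp (-|a + t|) ≤ 1 := exp_le_one_iff.2 (by simp)
  have h₂ : exp (-|a - t|) ≤ 1 := exp_le_one_iff.2 (by simp)
  have h₃ : exp (-|a|) ≤ 1 := exp_le_one_iff.2 (by simp)
  rw [secondDiffExpNegAbs, abs_le]
  constructor <;> linarith [exp_pos (-|a + t|), exp_pos (-|a - t|), exp_pos (-|a|)]

lemma le_min_sq_one (a t : ℝ) : secondDiffExpNegAbs a t ≤ min (t ^ 2) 1 := by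
  have hle_one := (abs_le.1 (abs_le_one a t)).2
  rcases le_or_gt |t| 1 with ht | ht
  · refine le_min ?_ hle_one
    calc secondDiffExpNegAbs a t ≤ exp (-|a|) * (cosh t - 1) := le_exp_mul_cosh_sub_one a t
      _ ≤ cosh t - 1 :=
        mul_le_of_le_one_left (sub_nonneg.2 (one_le_cosh t)) (exp_le_one_iff.2 (by simp))
      _ ≤ t ^ 2 := cosh_sub_one_le_sq ht
  · rwa [min_eq_right (one_le_sq_iff_one_le_abs t |>.2 ht.le)]

lemma abs_le_inv_mul_min_sq_one {a : ℝ} (ha : a ≠ 0) (t : ℝ) :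
    |secondDiffExpNegAbs a t| ≤ (min |a| 1 ^ 2)⁻¹ * min (t ^ 2) 1 := by
  set r := min |a| 1
  have hr0 : 0 < r := lt_min (abs_pos.2 ha) one_pos
  have hr1 : r ≤ 1 := min_le_right _ _
  rcases le_or_gt |t| |a| with ht | ht
  · have hnonneg : 0 ≤ secondDiffExpNegAbs a t := by
      rw [eq_exp_mul_cosh_sub_one ht]
      exact mul_nonneg (exp_pos _).le (sub_nonneg.2 (one_le_cosh t))
    rw [abs_of_nonneg hnonneg]
    exact (le_min_sq_one a t).trans <| le_mul_of_one_le_left (by positivity) <|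
      one_le_inv₀ (by positivity) |>.2 (pow_le_one₀ hr0.le hr1)
  · calc |secondDiffExpNegAbs a t| ≤ 1 := abs_le_one a t
      _ ≤ (r ^ 2)⁻¹ * min (t ^ 2) 1 := by
        rw [le_inv_mul_iff₀ (by positivity), mul_one, ← sq_abs t]
        exact le_min (pow_le_pow_left₀ hr0.le ((min_le_left _ _).trans ht.le) 2)
          (pow_le_one₀ hr0.le hr1)

end secondDiffExpNegAbs

lemma integrableOn_compl_ball_norm_rpow_neg {E : Type*} [NormedAddCommGroup E]
    [NormedSpace ℝ E] [FiniteDimensional ℝ E] [MeasurableSpace E] [BorelSpace E]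
    {μ : Measure E} [μ.IsAddHaarMeasure] {q : ℝ} (hq : (Module.finrank ℝ E : ℝ) < q) :
    IntegrableOn (fun y : E => ‖y‖ ^ (-q)) (ball 0 1)ᶜ μ := by
  have hq0 : 0 ≤ q := (Nat.cast_nonneg _).trans hq.le
  refine ((integrable_one_add_norm hq).const_mul (2 ^ q)).integrableOn.mono'
    (by fun_prop : Measurable fun y : E => ‖y‖ ^ (-q)).aestronglyMeasurable
    ((ae_restrict_iff' measurableSet_ball.compl).2 (.of_forall fun y hy => ?_))
  have hy : 1 ≤ ‖y‖ := by simpa using hy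
  rw [norm_of_nonneg (by positivity)]
  calc ‖y‖ ^ (-q) = 2 ^ q * (2 * ‖y‖) ^ (-q) := by
        rw [mul_rpow zero_le_two (norm_nonneg y), ← mul_assoc, ← rpow_add two_pos,
          add_neg_cancel, rpow_zero, one_mul]
    _ ≤ 2 ^ q * (1 + ‖y‖) ^ (-q) := mul_le_mul_of_nonneg_left
        (rpow_le_rpow_of_nonpos (by positivity) (by linarith) (by linarith)) (by positivity)

section Kernel

variable {n : ℕ} {s : ℝ}

lemma measurable_kk : Measurable (kk n s) := by
  unfold kk; fun_prop

lemma kk_nonneg (y : EuclideanSpace ℝ (Fin n)) : 0 ≤ kk n s y :=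
  rpow_nonneg (norm_nonneg _) _

lemma kk_zero (hs : 0 < s) : kk n s 0 = 0 := by
  rw [kk, norm_zero, zero_rpow]
  linarith [(Nat.cast_nonneg n : (0 : ℝ) ≤ n)]

lemma sq_mul_kk_le (y : EuclideanSpace ℝ (Fin n)) :
    ‖y‖ ^ 2 * kk n s y ≤ ‖y‖ ^ (-((n : ℝ) + 2 * s - 2)) := by
  rcases eq_or_ne y 0 with rfl | hy
  · simpa using rpow_nonneg le_rfl _
  · refine le_of_eq ?_
    rw [kk, ← rpow_natCast, ← rpow_add (norm_pos_iff.2 hy)]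
    congr 1
    push_cast
    ring

lemma integrable_min_sq_one_mul_kk (hn : 1 ≤ n) (hs : s ∈ Ioo 0 1) :
    Integrable fun y : EuclideanSpace ℝ (Fin n) => min (‖y‖ ^ 2) 1 * kk n s y := by
  have hmeas : AEStronglyMeasurable fun y : EuclideanSpace ℝ (Fin n) =>
      min (‖y‖ ^ 2) 1 * kk n s y :=
    ((by fun_prop : Continuous fun y : EuclideanSpace ℝ (Fin n) => min (‖y‖ ^ 2) 1)
      |>.measurable.mul measurable_kk).aestronglyMeasurable
  have hnorm (y : EuclideanSpace ℝ (Fin n)) :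
      ‖min (‖y‖ ^ 2) 1 * kk n s y‖ = min (‖y‖ ^ 2) 1 * kk n s y :=
    norm_of_nonneg (mul_nonneg (by positivity) (kk_nonneg y))
  have hball : IntegrableOn (fun y => min (‖y‖ ^ 2) 1 * kk n s y) (ball 0 1) := by
    refine integrableOn_ball_of_norm_le_rpow (C := 1) (α := n + 2 * s - 2) (by simpa)
      (by simp; linarith [hs.2]) (ae_of_all _ fun y => ?_) hmeas
    rw [hnorm, one_mul]
    exact (mul_le_mul_of_nonneg_right (min_le_left _ _) (kk_nonneg y)).trans (sq_mul_kk_le y)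
  have hcompl : IntegrableOn (fun y => min (‖y‖ ^ 2) 1 * kk n s y) (ball 0 1)ᶜ := by
    refine (integrableOn_compl_ball_norm_rpow_neg (q := n + 2 * s) (by simp; linarith [hs.1]))
      |>.mono' hmeas.restrict (ae_of_all _ fun y => ?_)
    rw [hnorm]
    exact mul_le_of_le_one_left (kk_nonneg y) (min_le_right _ _)
  simpa using hball.union hcompl

lemma continuous_d2 {v : EuclideanSpace ℝ (Fin n) → ℝ} (hv : Continuous v)
    (x : EuclideanSpace ℝ (Fin n)) : Continuous (d2 v x) := by
  unfold d2; fun_prop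

lemma intOK_of_abs_d2_le (hn : 1 ≤ n) (hs : s ∈ Ioo 0 1) {v : EuclideanSpace ℝ (Fin n) → ℝ}
    (hv : Continuous v) {x : EuclideanSpace ℝ (Fin n)} {C : ℝ}
    (h : ∀ y, |d2 v x y| ≤ C * min (‖y‖ ^ 2) 1) : intOK s v x := by
  refine ((integrable_min_sq_one_mul_kk hn hs).const_mul C).mono'
    ((continuous_d2 hv x).abs.measurable.mul measurable_kk).aestronglyMeasurable
    (ae_of_all _ fun y => ?_)
  rw [norm_of_nonneg (mul_nonneg (abs_nonneg _) (kk_nonneg y)), ← mul_assoc]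
  exact mul_le_mul_of_nonneg_right (h y) (kk_nonneg y)

namespace IsKernel

variable {lam Lam : ℝ} {μ : EuclideanSpace ℝ (Fin n) → ℝ}

lemma mul_kk_mem_Icc (hμ : IsKernel lam Lam μ) (hs : 0 < s) (y : EuclideanSpace ℝ (Fin n)) :
    μ (‖y‖⁻¹ • y) * kk n s y ∈ Icc (lam * kk n s y) (Lam * kk n s y) := by
  rcases eq_or_ne y 0 with rfl | hy
  · simp [kk_zero hs]
  · obtain ⟨hlo, hhi⟩ := hμ.2.2 _ (norm_smul_inv_norm (𝕜 := ℝ) hy)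
    exact ⟨mul_le_mul_of_nonneg_right hlo (kk_nonneg y),
      mul_le_mul_of_nonneg_right hhi (kk_nonneg y)⟩

lemma integrable_d2_mul (hμ : IsKernel lam Lam μ) (hlam : 0 ≤ lam) (hs : 0 < s)
    {v : EuclideanSpace ℝ (Fin n) → ℝ} (hv : Continuous v) {x : EuclideanSpace ℝ (Fin n)}
    (h : intOK s v x) : Integrable fun y => d2 v x y * (μ (‖y‖⁻¹ • y) * kk n s y) := by
  have hmeas : Measurable fun y : EuclideanSpace ℝ (Fin n) => μ (‖y‖⁻¹ • y) :=
    hμ.1.comp (by fun_prop)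
  refine (h.const_mul Lam).mono'
    ((continuous_d2 hv x).measurable.mul (hmeas.mul measurable_kk)).aestronglyMeasurable
    (ae_of_all _ fun y => ?_)
  obtain ⟨hlo, hhi⟩ := hμ.mul_kk_mem_Icc hs y
  rw [norm_mul, norm_of_nonneg ((mul_nonneg hlam (kk_nonneg y)).trans hlo), Real.norm_eq_abs]
  calc |d2 v x y| * (μ (‖y‖⁻¹ • y) * kk n s y) ≤ |d2 v x y| * (Lam * kk n s y) :=
        mul_le_mul_of_nonneg_left hhi (abs_nonneg _)
    _ = Lam * (|d2 v x y| * kk n s y) := by ring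

lemma opL_le (hμ : IsKernel lam Lam μ) (hlam : 0 ≤ lam) (hn : 1 ≤ n) (hs : s ∈ Ioo 0 1)
    {v : EuclideanSpace ℝ (Fin n) → ℝ} (hv : Continuous v) {x : EuclideanSpace ℝ (Fin n)}
    (h : intOK s v x) (hd2 : ∀ y, d2 v x y ≤ min (‖y‖ ^ 2) 1) :
    opL s μ v x ≤ Lam * ∫ y, min (‖y‖ ^ 2) 1 * kk n s y := by
  rw [opL, ← integral_const_mul]
  refine integral_mono (hμ.integrable_d2_mul hlam hs.1 hv h)
    ((integrable_min_sq_one_mul_kk hn hs).const_mul Lam) fun y => ?_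
  obtain ⟨hlo, hhi⟩ := hμ.mul_kk_mem_Icc hs.1 y
  calc d2 v x y * (μ (‖y‖⁻¹ • y) * kk n s y)
      ≤ min (‖y‖ ^ 2) 1 * (μ (‖y‖⁻¹ • y) * kk n s y) :=
        mul_le_mul_of_nonneg_right (hd2 y) ((mul_nonneg hlam (kk_nonneg y)).trans hlo)
    _ ≤ min (‖y‖ ^ 2) 1 * (Lam * kk n s y) := mul_le_mul_of_nonneg_left hhi (by positivity)
    _ = Lam * (min (‖y‖ ^ 2) 1 * kk n s y) := by ring

end IsKernel

end Kernel

lemma min_sq_inner_le {E : Type*} [NormedAddCommGroup E] [InnerProductSpace ℝ E] {e : E}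
    (he : ‖e‖ ≤ 1) (y : E) : min (⟪e, y⟫ ^ 2) 1 ≤ min (‖y‖ ^ 2) 1 := by
  refine min_le_min_right 1 (sq_le_sq.2 ?_)
  rw [abs_norm]
  exact (abs_real_inner_le_norm e y).trans (mul_le_of_le_one_left (norm_nonneg y) he)

lemma d2_exp_neg_abs_inner {n : ℕ} (e x y : EuclideanSpace ℝ (Fin n)) :
    d2 (fun z => exp (-|⟪e, z⟫|)) x y = secondDiffExpNegAbs ⟪e, x⟫ ⟪e, y⟫ := by
  simp only [d2, secondDiffExpNegAbs, inner_add_right, inner_sub_right]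

theorem supersolution_exp_wedge_general
    (n : ℕ) (hn : 1 ≤ n) (s : ℝ) (hs : s ∈ Set.Ioo (0 : ℝ) 1)
    (lam Lam : ℝ) (hlam : 0 < lam) :
    ∃ C > (0 : ℝ), ∀ e : EuclideanSpace ℝ (Fin n), ‖e‖ = 1 →
      ∀ μ : EuclideanSpace ℝ (Fin n) → ℝ, IsKernel lam Lam μ →
      ∀ x : EuclideanSpace ℝ (Fin n), ⟪e, x⟫ ≠ 0 →
        intOK s (fun z => Real.exp (-|⟪e, z⟫|)) x ∧
        opL s μ (fun z => Real.exp (-|⟪e, z⟫|)) x ≤ C := by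
  refine ⟨max (Lam * ∫ y, min (‖y‖ ^ 2) 1 * kk n s y) 1, lt_max_of_lt_right one_pos,
    fun e he μ hμ x hx => ?_⟩
  have hφ : Continuous fun z : EuclideanSpace ℝ (Fin n) => exp (-|⟪e, z⟫|) := by fun_prop
  have hint : intOK s (fun z => exp (-|⟪e, z⟫|)) x := intOK_of_abs_d2_le hn hs hφ fun y => by
    rw [d2_exp_neg_abs_inner]
    exact (secondDiffExpNegAbs.abs_le_inv_mul_min_sq_one hx _).trans
      (mul_le_mul_of_nonneg_left (min_sq_inner_le he.le y) (by positivity))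
  refine ⟨hint, le_max_of_le_left (hμ.opL_le hlam.le hn hs hφ hint fun y => ?_)⟩
  rw [d2_exp_neg_abs_inner]
  exact (secondDiffExpNegAbs.le_min_sq_one _ _).trans (min_sq_inner_le he.le y)

theorem supersolution_exp_wedge
    (n : ℕ) (hn : 1 ≤ n) (s : ℝ) (hs : s ∈ Set.Ioo (0 : ℝ) 1)
    (lam Lam : ℝ) (hlam : 0 < lam) (hlamLam : lam ≤ Lam) :
    ∃ C > (0 : ℝ), ∀ e : EuclideanSpace ℝ (Fin n), ‖e‖ = 1 →
      ∀ μ : EuclideanSpace ℝ (Fin n) → ℝ, IsKernel lam Lam μ →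
      ∀ x : EuclideanSpace ℝ (Fin n), ⟪e, x⟫ ≠ 0 →
        intOK s (fun z => Real.exp (-|⟪e, z⟫|)) x ∧
        opL s μ (fun z => Real.exp (-|⟪e, z⟫|)) x ≤ C :=
  supersolution_exp_wedge_general n hn s hs lam Lam hlam
end
end
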